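/- arXiv:2008.11090 — 2 statements merged into one kernel-verified Lean document; each statement's English description precedes it below -/
import Mathlib

section
/- Let Γ and Δ be simple graphs on vertex sets V and W respectively, with Γ connected, and let φ : V → W be a surjective map such that: (i) whenever x and y are adjacent in Γ, either φ x and φ y are adjacent in Δ or φ x = φ y; (ii) every edge of Δ lifts, i.e. for all u, v adjacent in Δ there exist a, b adjacent in Γ with φ a = u and φ b = v; (iii) there is a constant L ∈ ℕ such that φ x₁ = φ x₂ implies dist_Γ(x₁, x₂) ≤ L. Then φ is a quasi-isometry of graph metrics: for all x, y ∈ V, dist_Δ(φ x, φ y) ≤ dist_Γ(x, y) and dist_Γ(x, y) ≤ (L + 1) · dist_Δ(φ x, φ y) + 2L. -/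
/-- Theorem 2.7 (at the level of 1-skeleta): a surjective graph map `φ` from a connected
simple graph `Γ` onto a simple graph `Δ` which maps adjacent vertices to adjacent or equal
vertices, such that every edge of `Δ` lifts to an edge of `Γ`, and such that any two vertices
with the same image are at graph distance at most `L`, is a quasi-isometry of graph metrics. -/
theorem graph_map_quasi_isometry
    {V W : Type*} (Γ : SimpleGraph V) (Δ : SimpleGraph W) (hΓ : Γ.Connected)
    (φ : V → W) (hsurj : Function.Surjective φ)
    (hadj : ∀ x y : V, Γ.Adj x y → Δ.Adj (φ x) (φ y) ∨ φ x = φ y)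
    (hlift : ∀ u v : W, Δ.Adj u v → ∃ a b : V, Γ.Adj a b ∧ φ a = u ∧ φ b = v)
    (L : ℕ) (hL : ∀ x₁ x₂ : V, φ x₁ = φ x₂ → Γ.dist x₁ x₂ ≤ L) :
    ∀ x y : V, Δ.dist (φ x) (φ y) ≤ Γ.dist x y ∧
      Γ.dist x y ≤ (L + 1) * Δ.dist (φ x) (φ y) + 2 * L := by
  -- Lemma A: every walk in Γ pushes to a walk in Δ of at most the same length.
  have pushA : ∀ {x y : V} (p : Γ.Walk x y),
      ∃ q : Δ.Walk (φ x) (φ y), q.length ≤ p.length := by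
    intro x y p
    induction p with
    | nil => exact ⟨SimpleGraph.Walk.nil, le_refl _⟩
    | cons h p ih =>
      obtain ⟨q, hq⟩ := ih
      rcases hadj _ _ h with h' | h'
      · exact ⟨SimpleGraph.Walk.cons h' q, by simpa using Nat.succ_le_succ hq⟩
      · rw [h']
        exact ⟨q, le_trans hq (Nat.le_succ _)⟩
  -- Lemma B: lift walks in Δ back to Γ with controlled distance.
  have liftB : ∀ {u v : W} (q : Δ.Walk u v) (x y : V), φ x = u → φ y = v →
      Γ.dist x y ≤ (L + 1) * q.length + L := by
    intro u v q
    induction q with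
    | nil =>
      intro x y hx hy
      simpa using hL x y (hx.trans hy.symm)
    | @cons u w v h q ih =>
      intro x y hx hy
      obtain ⟨a, b, hab, ha, hb⟩ := hlift _ _ h
      have h1 : Γ.dist x y ≤ Γ.dist x a + Γ.dist a y := hΓ.dist_triangle
      have h2 : Γ.dist a y ≤ Γ.dist a b + Γ.dist b y := hΓ.dist_triangle
      have h3 : Γ.dist x a ≤ L := hL x a (hx.trans ha.symm)
      have h4 : Γ.dist a b ≤ 1 := le_trans (SimpleGraph.dist_le hab.toWalk) (by simp)
      have h5 : Γ.dist b y ≤ (L + 1) * q.length + L := ih b y hb hy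
      calc Γ.dist x y ≤ Γ.dist x a + (Γ.dist a b + Γ.dist b y) :=
            le_trans h1 (Nat.add_le_add_left h2 _)
        _ ≤ L + (1 + ((L + 1) * q.length + L)) :=
            Nat.add_le_add h3 (Nat.add_le_add h4 h5)
        _ = (L + 1) * (q.length + 1) + L := by ring
        _ = (L + 1) * (SimpleGraph.Walk.cons h q).length + L := by
            simp [SimpleGraph.Walk.length_cons]
  intro x y
  obtain ⟨p, hp⟩ := hΓ.exists_walk_length_eq_dist x y
  obtain ⟨q, hq⟩ := pushA p
  have h1 : Δ.dist (φ x) (φ y) ≤ Γ.dist x y :=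
    le_trans (SimpleGraph.dist_le q) (by rw [← hp]; exact hq)
  refine ⟨h1, ?_⟩
  have hreach : Δ.Reachable (φ x) (φ y) := ⟨q⟩
  obtain ⟨q', hq'⟩ := hreach.exists_walk_length_eq_dist
  have := liftB q' x y rfl rfl
  rw [hq'] at this
  omega
end

section
/- Let ∂_X : (ι →₀ ℤ) →ₗ[ℤ] (κ →₀ ℤ) and ∂_M : (ι' →₀ ℤ) →ₗ[ℤ] (κ' →₀ ℤ) be ℤ-linear maps, and let φ : (ι →₀ ℤ) →ₗ[ℤ] (ι' →₀ ℤ) and ψ : (κ →₀ ℤ) →ₗ[ℤ] (κ' →₀ ℤ) be ℤ-linear maps satisfying ∂_M ∘ φ = ψ ∘ ∂_X. Suppose N ∈ ℕ is such that ‖φ(e_i)‖ ≤ N for every standard basis element e_i, i ∈ ι (the finitely supported function taking value 1 at i and 0 elsewhere). Then for every s in the image of ∂_X, ψ(s) lies in the image of ∂_M and FVol_{∂_M}(ψ s) ≤ N · FVol_{∂_X}(s). -/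
/-- The ℓ¹-norm of an integral cellular chain, valued in `ℕ∞`. -/
noncomputable def chainNorm {ι : Type*} (d : ι →₀ ℤ) : ℕ∞ :=
  ((d.sum fun _ v => v.natAbs : ℕ) : ℕ∞)

/-- The filling volume of a cycle `c` with respect to a boundary map `bdry`:
the infimum of the norms of chains whose boundary is `c`. -/
noncomputable def FVol {ι κ : Type*} (bdry : (ι →₀ ℤ) →ₗ[ℤ] (κ →₀ ℤ))
    (c : κ →₀ ℤ) : ℕ∞ :=
  sInf {x : ℕ∞ | ∃ d : ι →₀ ℤ, bdry d = c ∧ x = chainNorm d}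

def natNorm {ι : Type*} (d : ι →₀ ℤ) : ℕ := d.sum fun _ v => v.natAbs

lemma chainNorm_eq {ι : Type*} (d : ι →₀ ℤ) : chainNorm d = (natNorm d : ℕ∞) := rfl

lemma natNorm_eq_sum {ι : Type*} (d : ι →₀ ℤ) {s : Finset ι} (hs : d.support ⊆ s) :
    natNorm d = ∑ i ∈ s, (d i).natAbs := by
  rw [natNorm, Finsupp.sum_of_support_subset d hs _ (by simp)]

lemma natNorm_add_le {ι : Type*} (a b : ι →₀ ℤ) :
    natNorm (a + b) ≤ natNorm a + natNorm b := by
  classical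
  rw [natNorm_eq_sum (a + b) (Finsupp.support_add (g₁ := a) (g₂ := b)),
    natNorm_eq_sum a (Finset.subset_union_left), natNorm_eq_sum b (Finset.subset_union_right),
    ← Finset.sum_add_distrib]
  exact Finset.sum_le_sum fun i _ => by simpa using Int.natAbs_add_le (a i) (b i)

lemma natNorm_smul_le {ι : Type*} (z : ℤ) (a : ι →₀ ℤ) :
    natNorm (z • a) ≤ z.natAbs * natNorm a := by
  rw [natNorm_eq_sum (z • a) (Finsupp.support_smul (b := z) (g := a)), natNorm,
    Finsupp.sum, Finset.mul_sum]
  exact Finset.sum_le_sum fun i _ => by simp [Int.natAbs_mul]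

lemma key {ι ι' : Type*} (φ : (ι →₀ ℤ) →ₗ[ℤ] (ι' →₀ ℤ)) (N : ℕ)
    (hN : ∀ i : ι, chainNorm (φ (Finsupp.single i 1)) ≤ (N : ℕ∞)) (d : ι →₀ ℤ) :
    natNorm (φ d) ≤ N * natNorm d := by
  have hN' : ∀ i : ι, natNorm (φ (Finsupp.single i 1)) ≤ N := by
    intro i
    have := hN i
    rw [chainNorm_eq] at this
    exact_mod_cast this
  induction d using Finsupp.induction with
  | zero => simp [natNorm]
  | single_add a b f ha hb ih =>
    have h1 : φ (Finsupp.single a b + f) = b • φ (Finsupp.single a 1) + φ f := by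
      rw [map_add, ← map_smul]
      congr 2
      rw [Finsupp.smul_single]
      simp
    rw [h1]
    calc natNorm (b • φ (Finsupp.single a 1) + φ f)
        ≤ natNorm (b • φ (Finsupp.single a 1)) + natNorm (φ f) := natNorm_add_le _ _
      _ ≤ b.natAbs * natNorm (φ (Finsupp.single a 1)) + N * natNorm f :=
          Nat.add_le_add (natNorm_smul_le _ _) ih
      _ ≤ b.natAbs * N + N * natNorm f :=
          Nat.add_le_add_right (Nat.mul_le_mul_left _ (hN' a)) _
      _ = N * natNorm (Finsupp.single a b + f) := by
          classical
          have hsub : (Finsupp.single a b + f).support ⊆ insert a f.support := by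
            refine (Finsupp.support_add).trans
              (Finset.union_subset ?_ (Finset.subset_insert _ _))
            exact Finsupp.support_single_subset.trans (by simp)
          have hfa : f a = 0 := Finsupp.notMem_support_iff.mp ha
          rw [natNorm_eq_sum _ hsub, Finset.sum_insert ha]
          have : ∀ i ∈ f.support, ((Finsupp.single a b + f) i).natAbs = (f i).natAbs := by
            intro i hi
            have : i ≠ a := fun h => ha (h ▸ hi)
            simp [Finsupp.single_apply, this.symm]
          rw [Finset.sum_congr rfl this]
          simp [hfa, ← natNorm_eq_sum f (le_refl _), Nat.mul_add, Nat.mul_comm]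

/-- Chain-level claim from the proof of Lemma 3.3: a chain map `(φ, ψ)` commuting with the
boundary maps which sends each basis `n`-cell to a chain of norm at most `N` pushes fillings
forward, multiplying filling volumes by at most `N`. -/
theorem fvol_pushforward_le
    {ι κ ι' κ' : Type*}
    (bdryX : (ι →₀ ℤ) →ₗ[ℤ] (κ →₀ ℤ)) (bdryM : (ι' →₀ ℤ) →ₗ[ℤ] (κ' →₀ ℤ))
    (φ : (ι →₀ ℤ) →ₗ[ℤ] (ι' →₀ ℤ)) (ψ : (κ →₀ ℤ) →ₗ[ℤ] (κ' →₀ ℤ))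
    (hcomm : bdryM.comp φ = ψ.comp bdryX)
    (N : ℕ) (hN : ∀ i : ι, chainNorm (φ (Finsupp.single i 1)) ≤ (N : ℕ∞)) :
    ∀ s ∈ Set.range bdryX,
      ψ s ∈ Set.range bdryM ∧ FVol bdryM (ψ s) ≤ (N : ℕ∞) * FVol bdryX s := by
  intro s hs
  obtain ⟨d0, hd0⟩ := hs
  have hrange : ∀ d : ι →₀ ℤ, bdryX d = s → bdryM (φ d) = ψ s := by
    intro d hd
    have := congrFun (congrArg DFunLike.coe hcomm) d
    simp only [LinearMap.comp_apply] at this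
    rw [this, hd]
  refine ⟨⟨φ d0, hrange d0 hd0⟩, ?_⟩
  have hne : {x : ℕ∞ | ∃ d : ι →₀ ℤ, bdryX d = s ∧ x = chainNorm d}.Nonempty :=
    ⟨_, d0, hd0, rfl⟩
  obtain ⟨d, hd, hx⟩ := csInf_mem hne
  rw [FVol, FVol, hx]
  calc sInf {x : ℕ∞ | ∃ e : ι' →₀ ℤ, bdryM e = ψ s ∧ x = chainNorm e}
      ≤ chainNorm (φ d) := csInf_le (OrderBot.bddBelow _) ⟨φ d, hrange d hd, rfl⟩
    _ ≤ (N : ℕ∞) * chainNorm d := by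
        rw [chainNorm_eq, chainNorm_eq, ← Nat.cast_mul]
        exact_mod_cast key φ N hN d
end
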